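/- Let K be a field of characteristic zero and let D = ∂_{x_1} + (a_2·x_2 + b_2)·∂_{x_2} + (a_3·x_3 + b_3)·∂_{x_3} be the K-derivation of K[x_1,x_2,x_3] with a_2, b_2 ∈ K[x_1], a_3, b_3 ∈ K[x_1,x_2], and a_3 = 0. If D is a simple derivation, then Im D = D(K[x_1,x_2,x_3]) is not a Mathieu–Zhao space of K[x_1,x_2,x_3]. -/

import Mathlib

/-!
Write `x₁, x₂, x₃` for `X 0, X 1, X 2`. Since `D x₁ = 1`, the image of `D` contains `1`, and
a Mathieu–Zhao space containing `1` is the whole ring, so it suffices to show that `D` is not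
surjective. A simple derivation has no Darboux polynomials (`f ∣ D f`) besides the constants.
If `a₂` were a constant `α`, then `x₂ + β(x₁)` with `β' = α β - b₂` would be one, so `a₂` has
positive degree.

Suppose `D f = x₂ ^ m` with `m > deg_{x₂} b₃`. As `∂_{x₃}` commutes with `D`, `∂_{x₃} f` lies
in `ker D = K`, say it is `c`, and `g = f - c x₃` does not involve `x₃`. On such polynomials
`[∂_{x₂}, D] = a₂ ∂_{x₂}`, hence `∂_{x₂}^k (D g) = (D + k a₂) ∂_{x₂}^k g`; the left side is
`m!` for `k = m` and a constant for `k ≥ m`. Taking `k ≥ m` maximal with `w = ∂_{x₂}^k g ≠ 0`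
gives `w ∈ K[x₁]` with `w' + k a₂ w ∈ K`, which is impossible by degrees.
-/

open MvPolynomial

/-- A `K`-subspace `M` of `R` is a Mathieu–Zhao space if for all `a, b ∈ R` such that
`a ^ m ∈ M` for all `m ≥ 1`, there exists `N` such that `b * a ^ m ∈ M` for all `m ≥ N`. -/
def IsMathieuZhao (K : Type*) {R : Type*} [Field K] [CommRing R] [Algebra K R]
    (M : Submodule K R) : Prop :=
  ∀ a b : R, (∀ m : ℕ, 1 ≤ m → a ^ m ∈ M) →
    ∃ N : ℕ, ∀ m : ℕ, N ≤ m → b * a ^ m ∈ M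

/-- A `K`-derivation `D` of `R` is simple if the only ideals `I` of `R` with `D(I) ⊆ I`
are `0` and `R`. -/
def Derivation.IsSimple {K R : Type*} [CommRing K] [CommRing R] [Algebra K R]
    (D : Derivation K R R) : Prop :=
  ∀ I : Ideal R, (∀ a ∈ I, D a ∈ I) → I = ⊥ ∨ I = ⊤

theorem IsMathieuZhao.eq_top_of_one_mem {K R : Type*} [Field K] [CommRing R] [Algebra K R]
    {M : Submodule K R} (hM : IsMathieuZhao K M) (h1 : (1 : R) ∈ M) : M = ⊤ := by
  refine eq_top_iff.2 fun b _ => ?_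
  obtain ⟨N, hN⟩ := hM 1 b fun m _ => by rwa [one_pow]
  simpa using hN N le_rfl

theorem Derivation.IsSimple.eq_zero_or_isUnit_of_dvd {R A : Type*} [CommRing R] [CommRing A]
    [Algebra R A] {D : Derivation R A A} (hD : D.IsSimple) {f : A} (hf : f ∣ D f) :
    f = 0 ∨ IsUnit f := by
  have hstable : ∀ a ∈ Ideal.span {f}, D a ∈ Ideal.span {f} := by
    intro a ha
    obtain ⟨r, rfl⟩ := Ideal.mem_span_singleton.1 ha
    rw [Ideal.mem_span_singleton, Derivation.leibniz, smul_eq_mul, smul_eq_mul]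
    exact dvd_add (dvd_mul_right f _) (dvd_mul_of_dvd_right hf r)
  exact (hD _ hstable).imp Ideal.span_singleton_eq_bot.1 Ideal.span_singleton_eq_top.1

theorem Derivation.IsSimple.exists_eq_C_of_dvd {K σ : Type*} [Field K]
    {D : Derivation K (MvPolynomial σ K) (MvPolynomial σ K)} (hD : D.IsSimple)
    {f : MvPolynomial σ K} (hf : f ∣ D f) : ∃ c, f = C c := by
  rcases hD.eq_zero_or_isUnit_of_dvd hf with rfl | hu
  · exact ⟨0, C_0.symm⟩
  · obtain ⟨c, -, rfl⟩ := isUnit_iff_eq_C_of_isReduced.1 hu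
    exact ⟨c, rfl⟩

theorem Derivation.iterate_map_of_commutator_eq_mul {R A : Type*} [CommRing R] [CommRing A]
    [Algebra R A] (d D : Derivation R A A) {a : A} (ha : d a = 0) (P : A → Prop)
    (hP : ∀ h, P h → P (d h)) (hcomm : ∀ h, P h → d (D h) = D (d h) + a * d h)
    {g : A} (hg : P g) (k : ℕ) :
    d^[k] (D g) = D (d^[k] g) + k * a * d^[k] g := by
  induction k with
  | zero => simp
  | succ k ih =>
    rw [Function.iterate_succ_apply', ih, map_add, hcomm _ (Function.Iterate.rec P hg hP k),
      Function.iterate_succ_apply', Derivation.leibniz, Derivation.leibniz, ha,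
      Derivation.map_natCast]
    simp only [smul_eq_mul]
    push_cast
    ring

namespace Polynomial

theorem derivative_add_mul_ne_C {R : Type*} [CommRing R] [IsDomain R] {p q : R[X]}
    (hq : 0 < q.natDegree) (hp : p ≠ 0) (c : R) : derivative p + q * p ≠ C c := by
  intro h
  have hq0 : q ≠ 0 := by rintro rfl; simp at hq
  have hle : (q * p).natDegree ≤ p.natDegree := by
    rw [show q * p = C c - derivative p by rw [← h]; ring]
    refine (natDegree_sub_le _ _).trans ?_
    simpa using (natDegree_derivative_le p).trans (Nat.sub_le _ _)
  rw [natDegree_mul hq0 hp] at hle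
  omega

variable {K : Type*} [Field K] [CharZero K]

theorem exists_derivative_eq (q : K[X]) : ∃ p, derivative p = q := by
  induction q using Polynomial.induction_on' with
  | add q r hq hr =>
    obtain ⟨p, rfl⟩ := hq
    obtain ⟨p', rfl⟩ := hr
    exact ⟨p + p', map_add _ _ _⟩
  | monomial n a =>
    refine ⟨monomial (n + 1) (a / (n + 1)), ?_⟩
    rw [derivative_monomial, Nat.add_sub_cancel, Nat.cast_add_one,
      div_mul_cancel₀ _ (Nat.cast_add_one_ne_zero n)]

theorem exists_derivative_eq_C_mul_add (α : K) (q : K[X]) :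
    ∃ p, derivative p = C α * p + q := by
  rcases eq_or_ne α 0 with rfl | hα
  · simpa using exists_derivative_eq q
  -- `p = -∑ α⁻¹ ^ (k + 1) q⁽ᵏ⁾`: telescoping, as `q⁽ᵏ⁾ = 0` for `k > deg q`
  refine ⟨-∑ k ∈ Finset.range (q.natDegree + 1), C (α⁻¹ ^ (k + 1)) * derivative^[k] q,
    ?_⟩
  have htel := Finset.sum_range_sub (fun k => C (α⁻¹ ^ k) * derivative^[k] q)
    (q.natDegree + 1)
  have hscale : ∀ k, C α * C (α⁻¹ ^ (k + 1)) = C (α⁻¹ ^ k) := fun k => by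
    rw [← C_mul, pow_succ, ← mul_assoc, mul_comm α, mul_assoc, mul_inv_cancel₀ hα, mul_one]
  simp only [iterate_derivative_eq_zero (Nat.lt_succ_self q.natDegree), mul_zero, pow_zero, C_1,
    one_mul, Function.iterate_zero_apply, Function.iterate_succ_apply',
    Finset.sum_sub_distrib] at htel
  simp only [map_neg, derivative_sum, derivative_C_mul, mul_neg, Finset.mul_sum, ← mul_assoc,
    hscale]
  linear_combination -htel

end Polynomial

namespace MvPolynomial

variable {R σ : Type*} [CommRing R]

theorem supported_singleton_eq_range_aeval (i : σ) :
    supported R {i} = (Polynomial.aeval (X i : MvPolynomial σ R)).range := by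
  rw [supported_eq_adjoin_X, Set.image_singleton, Algebra.adjoin_singleton_eq_range_aeval]

theorem pderiv_eq_zero_of_mem_supported {s : Set σ} {i : σ} {f : MvPolynomial σ R}
    (hf : f ∈ supported R s) (hi : i ∉ s) : pderiv i f = 0 :=
  pderiv_eq_zero_of_notMem_vars fun h => hi (mem_supported.1 hf h)

theorem mem_supported_of_forall_pderiv_eq_zero [NoZeroDivisors R] [CharZero R] {s : Set σ}
    {f : MvPolynomial σ R} (h : ∀ i ∉ s, pderiv i f = 0) : f ∈ supported R s := by
  refine mem_supported.2 fun i hi => by_contra fun his => ?_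
  obtain ⟨d, hd, hid⟩ := (mem_vars_iff_mem_support i).1 hi
  have hle : Finsupp.single i 1 ≤ d :=
    Finsupp.single_le_iff.2 (Nat.one_le_iff_ne_zero.2 (Finsupp.mem_support_iff.1 hid))
  have hcoeff := congr_arg (coeff (d - Finsupp.single i 1)) (h i his)
  rw [coeff_pderiv, tsub_add_cancel_of_le hle, coeff_zero] at hcoeff
  exact mul_ne_zero (mem_support_iff.1 hd) (Nat.cast_add_one_ne_zero _) hcoeff

theorem pderiv_aeval_X_self (i : σ) (p : Polynomial R) :
    pderiv i (Polynomial.aeval (X i : MvPolynomial σ R) p)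
      = Polynomial.aeval (X i) (Polynomial.derivative p) := by
  simp

theorem pderiv_aeval_X_of_ne {i j : σ} (h : i ≠ j) (p : Polynomial R) :
    pderiv j (Polynomial.aeval (X i : MvPolynomial σ R) p) = 0 := by
  simp [pderiv_X_of_ne h]

theorem iterate_pderiv_aeval_X_self (i : σ) (n : ℕ) (p : Polynomial R) :
    (pderiv i)^[n] (Polynomial.aeval (X i : MvPolynomial σ R) p)
      = Polynomial.aeval (X i) (Polynomial.derivative^[n] p) :=
  (Function.Semiconj.iterate_right (fun p => (pderiv_aeval_X_self i p).symm) n p).symm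

theorem iterate_pderiv_X_pow_self (i : σ) (n : ℕ) :
    (pderiv i)^[n] (X i ^ n : MvPolynomial σ R) = C (n.factorial : R) := by
  have := iterate_pderiv_aeval_X_self (R := R) i n (Polynomial.X ^ n)
  rwa [Polynomial.iterate_derivative_X_pow_eq_C_mul, Nat.descFactorial_self, Nat.sub_self,
    pow_zero, mul_one, Polynomial.aeval_C, algebraMap_eq, map_pow, Polynomial.aeval_X] at this

theorem iterate_pderiv_eq_zero_of_forall_lt {i : σ} :
    ∀ {k : ℕ} {f : MvPolynomial σ R}, (∀ d ∈ f.support, d i < k) → (pderiv i)^[k] f = 0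
  | 0, f, h => support_eq_empty.1 (Finset.eq_empty_of_forall_notMem fun d hd => (h d hd).not_ge
      (Nat.zero_le _))
  | k + 1, f, h => by
    refine iterate_pderiv_eq_zero_of_forall_lt (f := pderiv i f) fun d hd => ?_
    rw [mem_support_iff, coeff_pderiv] at hd
    simpa using h _ (mem_support_iff.2 (left_ne_zero_of_mul hd))

theorem iterate_pderiv_eq_zero_of_degreeOf_lt {i : σ} {k : ℕ} {f : MvPolynomial σ R}
    (h : degreeOf i f < k) : (pderiv i)^[k] f = 0 :=
  iterate_pderiv_eq_zero_of_forall_lt ((degreeOf_lt_iff (by omega)).1 h)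

theorem exists_iterate_pderiv_ne_zero_and_pderiv_eq_zero (i : σ) {f : MvPolynomial σ R}
    (hf : f ≠ 0) : ∃ r, (pderiv i)^[r] f ≠ 0 ∧ pderiv i ((pderiv i)^[r] f) = 0 := by
  obtain ⟨k, hk⟩ : ∃ k, (pderiv i)^[k] f = 0 :=
    ⟨_, iterate_pderiv_eq_zero_of_degreeOf_lt (Nat.lt_succ_self (degreeOf i f))⟩
  induction k generalizing f with
  | zero => exact absurd hk hf
  | succ k ih =>
    by_cases h : pderiv i f = 0
    · exact ⟨0, hf, h⟩
    · obtain ⟨r, hr⟩ := ih h hk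
      exact ⟨r + 1, hr⟩

theorem pderiv_comm (i j : σ) (f : MvPolynomial σ R) :
    pderiv i (pderiv j f) = pderiv j (pderiv i f) := by
  classical
  have : ⁅pderiv i, pderiv j⁆ = (0 : Derivation R (MvPolynomial σ R) (MvPolynomial σ R)) :=
    derivation_ext fun k => by
      rw [Derivation.commutator_apply, pderiv_X, pderiv_X]
      simp [Pi.single_apply, apply_ite]
  have h := congr($this f)
  rw [Derivation.commutator_apply] at h
  exact sub_eq_zero.1 h

theorem pderiv_map_sub_map_pderiv [Fintype σ] (i : σ)
    (D : Derivation R (MvPolynomial σ R) (MvPolynomial σ R)) (f : MvPolynomial σ R) :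
    pderiv i (D f) - D (pderiv i f) = ∑ j, pderiv i (D (X j)) * pderiv j f := by
  classical
  have hsum : ∀ (c : σ → MvPolynomial σ R) g,
      (∑ j, c j • pderiv j) g = ∑ j, c j * pderiv j g :=
    fun c g => by rw [← Derivation.coeFnAddMonoidHom_apply, map_sum, Finset.sum_apply]; rfl
  have : ⁅pderiv i, D⁆ = ∑ j, pderiv i (D (X j)) • pderiv j :=
    derivation_ext fun k => by
      rw [Derivation.commutator_apply, pderiv_X, hsum]
      simp [Pi.single_apply, apply_ite]
  have h := congr($this f)
  rwa [Derivation.commutator_apply, hsum] at h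

end MvPolynomial

theorem Derivation.not_isSimple_of_map_X_eq_C_mul_add {K σ : Type*} [Field K] [CharZero K]
    {D : Derivation K (MvPolynomial σ K) (MvPolynomial σ K)} {i j : σ} (hij : i ≠ j) {α : K}
    {b : Polynomial K} (hi : D (X i) = 1)
    (hj : D (X j) = C α * X j + Polynomial.aeval (X i) b) : ¬ D.IsSimple := by
  intro hD
  obtain ⟨β, hβ⟩ := Polynomial.exists_derivative_eq_C_mul_add α (-b)
  set f := X j + Polynomial.aeval (X i : MvPolynomial σ K) β
  have hf : D f = C α * f := by
    rw [map_add, hj, Derivation.map_aeval, hi, smul_eq_mul, mul_one, hβ]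
    simp [f]
    ring
  obtain ⟨c, hc⟩ := hD.exists_eq_C_of_dvd (hf ▸ dvd_mul_left f (C α))
  have := congr_arg (pderiv j) hc
  simp [f, pderiv_aeval_X_of_ne hij] at this

theorem Derivation.map_aeval_X_add_mul_ne_C {R σ : Type*} [CommRing R] [IsDomain R]
    {D : Derivation R (MvPolynomial σ R) (MvPolynomial σ R)} {i : σ} (hi : D (X i) = 1)
    {p q : Polynomial R} (hq : 0 < q.natDegree) (hp : p ≠ 0) (c : R) :
    D (Polynomial.aeval (X i) p) + Polynomial.aeval (X i) q * Polynomial.aeval (X i) p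
      ≠ C c := by
  intro h
  refine Polynomial.derivative_add_mul_ne_C hq hp c
    (transcendental_iff_injective.1 (transcendental_X (R := R) i) ?_)
  simpa [hi] using h

section ThreeVariables

variable {K : Type*} [Field K] {D : Derivation K (MvPolynomial (Fin 3) K) (MvPolynomial (Fin 3) K)}
  {q b : Polynomial K} {b3 : MvPolynomial (Fin 3) K}

theorem pderiv_two_map_eq_map_pderiv_two (hD1 : D (X 0) = 1)
    (hD2 : D (X 1) = Polynomial.aeval (X 0) q * X 1 + Polynomial.aeval (X 0) b)
    (hD3 : D (X 2) = b3) (hb3 : b3 ∈ supported K {0, 1}) (f : MvPolynomial (Fin 3) K) :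
    pderiv 2 (D f) = D (pderiv 2 f) := by
  rw [← sub_eq_zero, pderiv_map_sub_map_pderiv, Fin.sum_univ_three, hD1, hD2, hD3,
    pderiv_eq_zero_of_mem_supported hb3 (by simp)]
  simp

theorem pderiv_one_map_eq_map_pderiv_one_add (hD1 : D (X 0) = 1)
    (hD2 : D (X 1) = Polynomial.aeval (X 0) q * X 1 + Polynomial.aeval (X 0) b)
    (hD3 : D (X 2) = b3) {f : MvPolynomial (Fin 3) K} (hf : pderiv 2 f = 0) :
    pderiv 1 (D f) = D (pderiv 1 f) + Polynomial.aeval (X 0) q * pderiv 1 f := by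
  rw [← sub_eq_iff_eq_add', pderiv_map_sub_map_pderiv, Fin.sum_univ_three, hD1, hD2, hD3, hf]
  simp

theorem exists_pderiv_two_eq_zero_of_map_eq (hD : D.IsSimple) (hD1 : D (X 0) = 1)
    (hD2 : D (X 1) = Polynomial.aeval (X 0) q * X 1 + Polynomial.aeval (X 0) b)
    (hD3 : D (X 2) = b3) (hb3 : b3 ∈ supported K {0, 1}) {f h : MvPolynomial (Fin 3) K}
    (hf : D f = h) (hh : pderiv 2 h = 0) :
    ∃ (g : MvPolynomial (Fin 3) K) (c : K), pderiv 2 g = 0 ∧ D g = h - C c * b3 := by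
  obtain ⟨c, hc⟩ := hD.exists_eq_C_of_dvd (f := pderiv 2 f) <| by
    rw [← pderiv_two_map_eq_map_pderiv_two hD1 hD2 hD3 hb3, hf, hh]
    exact dvd_zero _
  refine ⟨f - C c * X 2, c, by simp [hc], ?_⟩
  rw [map_sub, hf, ← smul_eq_C_mul, D.map_smul, hD3, smul_eq_C_mul]

theorem map_ne_X_one_pow [CharZero K] (hD : D.IsSimple) (hD1 : D (X 0) = 1)
    (hD2 : D (X 1) = Polynomial.aeval (X 0) q * X 1 + Polynomial.aeval (X 0) b)
    (hD3 : D (X 2) = b3) (hb3 : b3 ∈ supported K {0, 1}) (hq : 0 < q.natDegree) {m : ℕ}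
    (hm : degreeOf 1 b3 < m) (f : MvPolynomial (Fin 3) K) : D f ≠ X 1 ^ m := by
  intro hf
  obtain ⟨g, c, hg2, hDg⟩ :=
    exists_pderiv_two_eq_zero_of_map_eq hD hD1 hD2 hD3 hb3 hf (by simp)
  have hP : ∀ h : MvPolynomial (Fin 3) K, pderiv 2 h = 0 → pderiv 2 (pderiv 1 h) = 0 :=
    fun h hh => by rw [pderiv_comm, hh, map_zero]
  have hiter := (pderiv 1).iterate_map_of_commutator_eq_mul D
    (pderiv_aeval_X_of_ne (by decide) q) _ hP
    (fun _ hh => pderiv_one_map_eq_map_pderiv_one_add hD1 hD2 hD3 hh) hg2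
  have htop : (pderiv 1)^[m] (D g) = C (m.factorial : K) := by
    rw [hDg, iterate_map_sub, iterate_pderiv_X_pow_self,
      iterate_pderiv_eq_zero_of_degreeOf_lt ((degreeOf_C_mul_le _ _ _).trans_lt hm), sub_zero]
  have hu : (pderiv 1)^[m] g ≠ 0 := fun h0 =>
    (Nat.cast_ne_zero.2 m.factorial_ne_zero).symm (by simpa [h0] using (hiter m).symm.trans htop)
  obtain ⟨r, hw, hw1⟩ := exists_iterate_pderiv_ne_zero_and_pderiv_eq_zero 1 hu
  rw [← Function.iterate_add_apply] at hw hw1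
  have hw2 : pderiv 2 ((pderiv 1)^[r + m] g) = 0 := Function.Iterate.rec _ hg2 hP _
  obtain ⟨p, hp⟩ :
      (pderiv 1)^[r + m] g ∈ (Polynomial.aeval (X 0 : MvPolynomial (Fin 3) K)).range := by
    rw [← supported_singleton_eq_range_aeval]
    refine mem_supported_of_forall_pderiv_eq_zero fun i hi => ?_
    fin_cases i <;> simp_all
  obtain ⟨ε, hε⟩ : ∃ ε : K, (pderiv 1)^[r + m] (D g) = C ε := by
    rw [Function.iterate_add_apply, htop]
    rcases r with _ | r
    · exact ⟨_, rfl⟩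
    · exact ⟨0, by simp [iterate_map_zero]⟩
  refine D.map_aeval_X_add_mul_ne_C hD1 (q := Polynomial.C ((r + m : ℕ) : K) * q)
    (by rwa [Polynomial.natDegree_C_mul (Nat.cast_ne_zero.2 (by omega))]) (p := p)
    (by rintro rfl; simp_all) ε ?_
  rw [← hε, hiter, ← hp]
  simp [mul_assoc]

end ThreeVariables

theorem statement9_general (K : Type*) [Field K] [CharZero K]
    (a2 b2 a3 b3 : MvPolynomial (Fin 3) K)
    (ha2 : a2 ∈ supported K ({0} : Set (Fin 3)))
    (hb2 : b2 ∈ supported K ({0} : Set (Fin 3)))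
    (hb3 : b3 ∈ supported K ({0, 1} : Set (Fin 3)))
    (ha30 : a3 = 0)
    (D : Derivation K (MvPolynomial (Fin 3) K) (MvPolynomial (Fin 3) K))
    (hD1 : D (X 0) = 1)
    (hD2 : D (X 1) = a2 * X 1 + b2)
    (hD3 : D (X 2) = a3 * X 2 + b3)
    (hD : Derivation.IsSimple D) :
    ¬ IsMathieuZhao K (LinearMap.range D.toLinearMap) := by
  intro hMZ
  rw [supported_singleton_eq_range_aeval] at ha2 hb2
  obtain ⟨q, rfl⟩ := (AlgHom.mem_range _).1 ha2
  obtain ⟨b, rfl⟩ := (AlgHom.mem_range _).1 hb2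
  rw [ha30, zero_mul, zero_add] at hD3
  have hsurj := hMZ.eq_top_of_one_mem ⟨X 0, hD1⟩
  rcases Nat.eq_zero_or_pos q.natDegree with hq | hq
  · rw [Polynomial.eq_C_of_natDegree_eq_zero hq, Polynomial.aeval_C, algebraMap_eq] at hD2
    exact D.not_isSimple_of_map_X_eq_C_mul_add (by decide) hD1 hD2 hD
  · obtain ⟨f, hf⟩ : X 1 ^ (degreeOf 1 b3 + 1) ∈ LinearMap.range D.toLinearMap :=
      hsurj ▸ Submodule.mem_top
    exact map_ne_X_one_pow hD hD1 hD2 hD3 hb3 hq (Nat.lt_succ_self _) f hf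

/-- For `D = ∂_{x₁} + (a₂ x₂ + b₂) ∂_{x₂} + (a₃ x₃ + b₃) ∂_{x₃}` with
`a₂, b₂ ∈ K[x₁]`, `a₃, b₃ ∈ K[x₁, x₂]` and `a₃ = 0`: if `D` is simple, then `Im D`
is not a Mathieu–Zhao space of `K[x₁, x₂, x₃]`. -/
theorem statement9 (K : Type*) [Field K] [CharZero K]
    (a2 b2 a3 b3 : MvPolynomial (Fin 3) K)
    (ha2 : a2 ∈ supported K ({0} : Set (Fin 3)))
    (hb2 : b2 ∈ supported K ({0} : Set (Fin 3)))
    (ha3 : a3 ∈ supported K ({0, 1} : Set (Fin 3)))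
    (hb3 : b3 ∈ supported K ({0, 1} : Set (Fin 3)))
    (ha30 : a3 = 0)
    (D : Derivation K (MvPolynomial (Fin 3) K) (MvPolynomial (Fin 3) K))
    (hD1 : D (X 0) = 1)
    (hD2 : D (X 1) = a2 * X 1 + b2)
    (hD3 : D (X 2) = a3 * X 2 + b3)
    (hD : Derivation.IsSimple D) :
    ¬ IsMathieuZhao K (LinearMap.range D.toLinearMap) :=
  statement9_general K a2 b2 a3 b3 ha2 hb2 hb3 ha30 D hD1 hD2 hD3 hD
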